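/- Let Δ > 0, b ∈ (0,1), and let i ≥ 2 be an integer. With h_k as defined from b, Δ, i, one has h_{i−1} − h₀ = (2Δ/(3i)) · (3i−2)·(1−b)²·(i−1) / ((2bi−b+1)·(b+2i−1)); in particular h₀ < h_{i−1}. -/

import Mathlib

noncomputable section

/-- The ratio h_k = w_k / u_k of the per-layer cost weight to the per-layer volume
weight in the two-dimensional staircase optimization, with c₀ = 1/(1−b),
c₁ = b/(1−b)², c₂ = (b+b²)/(1−b)³. -/
def hseq (Δ b : ℝ) (i k : ℕ) : ℝ :=
  (2 * Δ / (3 * (i : ℝ))) *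
    (3 * (i : ℝ) ^ 2 * ((b + b ^ 2) / (1 - b) ^ 3) +
      (6 * (i : ℝ) * (k : ℝ) + 3 * (i : ℝ)) * (b / (1 - b) ^ 2) +
      (1 + 3 * (k : ℝ) + 3 * (k : ℝ) ^ 2) * (1 / (1 - b))) /
    ((1 + 2 * (k : ℝ)) * (1 / (1 - b)) + 2 * (i : ℝ) * (b / (1 - b) ^ 2))

/-! Clearing the common factor `1 - b` out of `c₀, c₁, c₂` writes `h_k` as
`(2Δ/(3i)) · N_k / ((1 - b) D_k)` with `N_k, D_k` polynomial in `b, i, k`. At the two ends the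
denominators collapse to `D₀ = 2bi - b + 1` and `D_{i-1} = b + 2i - 1`, both positive for
`b ≥ 0`, and cross-multiplying `N_{i-1} D₀ - N₀ D_{i-1}` factors as `(3i - 2)(1 - b)³(i - 1)`. -/

theorem hseq_eq_div (Δ b : ℝ) (i k : ℕ) (hb1 : b ≠ 1) :
    hseq Δ b i k =
      (2 * Δ / (3 * (i : ℝ))) *
        (3 * (i : ℝ) ^ 2 * (b + b ^ 2) + (6 * (i : ℝ) * k + 3 * i) * b * (1 - b) +
          (1 + 3 * (k : ℝ) + 3 * (k : ℝ) ^ 2) * (1 - b) ^ 2) /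
        ((1 - b) * ((1 + 2 * (k : ℝ)) * (1 - b) + 2 * i * b)) := by
  have h1b : 1 - b ≠ 0 := sub_ne_zero.mpr (Ne.symm hb1)
  have hnum : 3 * (i : ℝ) ^ 2 * ((b + b ^ 2) / (1 - b) ^ 3) +
      (6 * (i : ℝ) * k + 3 * i) * (b / (1 - b) ^ 2) +
      (1 + 3 * (k : ℝ) + 3 * (k : ℝ) ^ 2) * (1 / (1 - b)) =
      (3 * (i : ℝ) ^ 2 * (b + b ^ 2) + (6 * (i : ℝ) * k + 3 * i) * b * (1 - b) +
        (1 + 3 * (k : ℝ) + 3 * (k : ℝ) ^ 2) * (1 - b) ^ 2) / (1 - b) ^ 3 := by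
    field_simp
  have hden : (1 + 2 * (k : ℝ)) * (1 / (1 - b)) + 2 * i * (b / (1 - b) ^ 2) =
      ((1 + 2 * (k : ℝ)) * (1 - b) + 2 * i * b) / (1 - b) ^ 2 := by
    field_simp
  rw [hseq, hnum, hden]
  rcases eq_or_ne ((1 + 2 * (k : ℝ)) * (1 - b) + 2 * i * b) 0 with hD | hD
  · simp [hD]
  · field_simp

theorem ends_denominators_pos {b x : ℝ} (hb : 0 ≤ b) (hx : 1 ≤ x) :
    0 < 2 * b * x - b + 1 ∧ 0 < b + 2 * x - 1 :=
  ⟨by nlinarith, by linarith⟩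

theorem hseq_sub_hseq_zero (Δ b : ℝ) (hb : 0 ≤ b) (hb1 : b < 1) (i : ℕ) (hi : 1 ≤ i) :
    hseq Δ b i (i - 1) - hseq Δ b i 0 =
      (2 * Δ / (3 * (i : ℝ))) *
        ((3 * (i : ℝ) - 2) * (1 - b) ^ 2 * ((i : ℝ) - 1)) /
        ((2 * b * (i : ℝ) - b + 1) * (b + 2 * (i : ℝ) - 1)) := by
  have h1b : 0 < 1 - b := sub_pos.mpr hb1
  obtain ⟨hD₀, hD⟩ := ends_denominators_pos hb (show (1 : ℝ) ≤ i by exact_mod_cast hi)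
  rw [hseq_eq_div Δ b i _ hb1.ne, hseq_eq_div Δ b i _ hb1.ne, Nat.cast_sub hi, Nat.cast_one]
  have hD₀' : (1 + 2 * ((0 : ℕ) : ℝ)) * (1 - b) + 2 * i * b = 2 * b * i - b + 1 := by
    push_cast; ring
  have hD' : (1 + 2 * ((i : ℝ) - 1)) * (1 - b) + 2 * i * b = b + 2 * i - 1 := by ring
  rw [hD₀', hD', div_sub_div _ _ (by positivity) (by positivity),
    div_eq_div_iff (by positivity) (by positivity)]
  ring

/-- h_{i−1} − h₀ = (2Δ/(3i)) · (3i−2)(1−b)²(i−1) / ((2bi−b+1)(b+2i−1)); in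
particular h₀ < h_{i−1}. -/
theorem hseq_ends_diff (Δ b : ℝ) (hΔ : 0 < Δ) (hb : 0 < b) (hb1 : b < 1)
    (i : ℕ) (hi : 2 ≤ i) :
    hseq Δ b i (i - 1) - hseq Δ b i 0 =
      (2 * Δ / (3 * (i : ℝ))) *
        ((3 * (i : ℝ) - 2) * (1 - b) ^ 2 * ((i : ℝ) - 1)) /
        ((2 * b * (i : ℝ) - b + 1) * (b + 2 * (i : ℝ) - 1)) ∧
    hseq Δ b i 0 < hseq Δ b i (i - 1) := by
  have hdiff := hseq_sub_hseq_zero Δ b hb.le hb1 i (by omega)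
  refine ⟨hdiff, sub_pos.mp ?_⟩
  have hi' : (2 : ℝ) ≤ i := by exact_mod_cast hi
  obtain ⟨hD₀, hD⟩ := ends_denominators_pos hb.le (show (1 : ℝ) ≤ i by linarith)
  have hN : 0 < (3 * (i : ℝ) - 2) * (1 - b) ^ 2 * ((i : ℝ) - 1) :=
    mul_pos (mul_pos (by linarith) (pow_pos (sub_pos.mpr hb1) 2)) (by linarith)
  rw [hdiff]
  positivity
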